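/- arXiv:1212.6611 — 4 statements merged into one kernel-verified Lean document; each statement's English description precedes it below -/
import Mathlib

section
/- Define the symmetric element: for β ∈ G with index j = j(β) (the smallest j ∈ ℤ* with β(O) ∈ D_j), set β₋ = ξ^{−2j−1}β if j > 0 and β₋ = ξ^{−2j+1}β if j < 0. Then: (1) β₋(O) lies in D_{−j−2} if j > 0 and in D_{−j+2} if j < 0, so β and β₋ have opposite signs; (2) the map β ↦ β₋ is injective on the set of elements of a fixed sign. -/
/-!
Translation by `ξ^t` permutes the Voronoi cells through an order-preserving shift of `ℤ*`,
so the minimal-index function is `ξ`-equivariant. Hence `β₋(O) = ξ^{-2j∓1} β(O)` has index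
`-j-2` (resp. `-j+2`), and `β` is recovered from `β₋` and this index.
-/

open Metric Set
open scoped Classical

/-- Four-point condition for δ-hyperbolicity. -/
def FourPointHyp (X : Type*) [MetricSpace X] (δ : ℝ) : Prop :=
  ∀ x y z w : X,
    dist x y + dist z w ≤ max (dist x z + dist y w) (dist y z + dist x w) + 2 * δ

/-- `s` is a geodesic segment from `a` to `b`. -/
def IsGeodSegment {X : Type*} [MetricSpace X] (a b : X) (s : Set X) : Prop :=
  ∃ f : ℝ → X, f 0 = a ∧ f (dist a b) = b ∧
    (∀ u ∈ Icc (0:ℝ) (dist a b), ∀ v ∈ Icc (0:ℝ) (dist a b),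
      dist (f u) (f v) = |u - v|) ∧
    s = f '' Icc (0:ℝ) (dist a b)

/-- `X` is a geodesic space. -/
def IsGeodesicSpace (X : Type*) [MetricSpace X] : Prop :=
  ∀ a b : X, ∃ s : Set X, IsGeodSegment a b s

/-- `τ : ℝ → X` is a geodesic line. -/
def IsGeodLine {X : Type*} [MetricSpace X] (τ : ℝ → X) : Prop :=
  ∀ u v : ℝ, dist (τ u) (τ v) = |u - v|

/-- The action of `G` on `X` is by isometries. -/
def IsomAction (G X : Type*) [Group G] [MetricSpace X] [MulAction G X] : Prop :=
  ∀ (γ : G) (x y : X), dist (γ • x) (γ • y) = dist x y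

/-- A group element `ξ` is hyperbolic: `n ↦ ξⁿ(x)` is a quasi-isometric embedding
of `ℤ` into `X`. -/
def IsHypElem {G : Type*} (X : Type*) [Group G] [MetricSpace X] [MulAction G X]
    (ξ : G) : Prop :=
  ∃ x : X, ∃ A : ℝ, 0 < A ∧ ∃ B : ℝ, ∀ m n : ℤ,
    A * |(m : ℝ) - (n : ℝ)| - B ≤ dist ((ξ ^ m) • x) ((ξ ^ n) • x)

/-- An axis of `ξ`: a geodesic line whose image is at finite Hausdorff distance
from its `ξ`-image (equivalently, joining the two fixed points of `ξ` at
infinity). -/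
def IsAxisAct {G X : Type*} [Group G] [MetricSpace X] [MulAction G X]
    (ξ : G) (τ : ℝ → X) : Prop :=
  IsGeodLine τ ∧ ∃ C : ℝ,
    (∀ t : ℝ, infDist (ξ • τ t) (range τ) ≤ C) ∧
    (∀ t : ℝ, infDist (τ t) (range fun s => ξ • τ s) ≤ C)

/-- The orbit points `x₁ = O`, `xᵢ = ξ^{i-1}(O)` for `i > 0`, `xᵢ = ξ^{i}(O)` for
`i < 0`. -/
noncomputable def orbitPt {G X : Type*} [Group G] [MetricSpace X] [MulAction G X]
    (ξ : G) (O : X) (i : ℤ) : X :=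
  if 0 < i then (ξ ^ (i - 1)) • O else (ξ ^ i) • O

/-- The Voronoi cell `Dᵢ` of the orbit point `xᵢ`. -/
noncomputable def vorCell {G X : Type*} [Group G] [MetricSpace X] [MulAction G X]
    (ξ : G) (O : X) (i : ℤ) : Set X :=
  {y : X | ∀ j : ℤ, j ≠ 0 → dist y (orbitPt ξ O i) ≤ dist y (orbitPt ξ O j)}

/-- `jx y` is the smallest index `j ∈ ℤ*` with `y ∈ D_j`. -/
def IsIndexFun {G X : Type*} [Group G] [MetricSpace X] [MulAction G X]
    (ξ : G) (O : X) (jx : X → ℤ) : Prop :=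
  ∀ y : X, jx y ≠ 0 ∧ y ∈ vorCell ξ O (jx y) ∧
    ∀ k : ℤ, k ≠ 0 → y ∈ vorCell ξ O k → jx y ≤ k

/-- The symmetric element `β₋ = ξ^{−2j−1}β` if `j = j(β) > 0`, and
`β₋ = ξ^{−2j+1}β` if `j < 0`. -/
noncomputable def symmElem {G X : Type*} [Group G] [MetricSpace X] [MulAction G X]
    (ξ : G) (O : X) (jx : X → ℤ) (β : G) : G :=
  if 0 < jx (β • O) then ξ ^ (-2 * jx (β • O) - 1) * β
  else ξ ^ (-2 * jx (β • O) + 1) * β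

/-- `D₁` or `D₋₁` separates points with indices `i` and `j`. -/
def Sep1 (i j : ℤ) : Prop :=
  (min i j < 1 ∧ 1 < max i j) ∨ (min i j < -1 ∧ -1 < max i j)

/-- The twisted product: `α⋆β = αβ₊` if `D₁` or `D₋₁` separates `α⁻¹(O)` and
`β(O)`, and `α⋆β = αβ₋` otherwise. -/
noncomputable def twProd {G X : Type*} [Group G] [MetricSpace X] [MulAction G X]
    (ξ : G) (O : X) (jx : X → ℤ) (α β : G) : G :=
  if Sep1 (jx (α⁻¹ • O)) (jx (β • O)) then α * β else α * symmElem ξ O jx β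

/-- Identifies `ℤ*` with `ℤ` through `xᵢ = ξ ^ orbitExp i • O`; `orbitIdx` is its inverse. -/
def orbitExp (i : ℤ) : ℤ := if 0 < i then i - 1 else i

def orbitIdx (n : ℤ) : ℤ := if 0 ≤ n then n + 1 else n

def shiftIdx (t i : ℤ) : ℤ := orbitIdx (orbitExp i + t)

lemma orbitExp_orbitIdx (n : ℤ) : orbitExp (orbitIdx n) = n := by
  unfold orbitExp orbitIdx; split_ifs <;> omega

lemma shiftIdx_ne_zero (t i : ℤ) : shiftIdx t i ≠ 0 := by
  unfold shiftIdx orbitIdx; split_ifs <;> omega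

lemma shiftIdx_mono (t : ℤ) : Monotone (shiftIdx t) := by
  intro i k hik
  unfold shiftIdx orbitIdx orbitExp; split_ifs <;> omega

lemma shiftIdx_shiftIdx_neg (t : ℤ) {k : ℤ} (hk : k ≠ 0) : shiftIdx t (shiftIdx (-t) k) = k := by
  unfold shiftIdx orbitIdx orbitExp; split_ifs <;> omega

section VoronoiCells

variable {G X : Type*} [Group G] [MetricSpace X] [MulAction G X]

lemma orbitPt_eq_zpow_smul (ξ : G) (O : X) (i : ℤ) : orbitPt ξ O i = (ξ ^ orbitExp i) • O := by
  unfold orbitPt orbitExp; split_ifs <;> rfl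

lemma zpow_smul_mem_vorCell (hiso : IsomAction G X) {ξ : G} {O y : X} {i : ℤ}
    (hy : y ∈ vorCell ξ O i) (t : ℤ) : (ξ ^ t) • y ∈ vorCell ξ O (shiftIdx t i) := by
  have hdist : ∀ n, dist ((ξ ^ t) • y) ((ξ ^ n) • O) = dist y ((ξ ^ (n - t)) • O) := fun n => by
    rw [← hiso (ξ ^ t) y ((ξ ^ (n - t)) • O), smul_smul, ← zpow_add, add_sub_cancel]
  intro k hk
  have hle := hy (orbitIdx (orbitExp k - t)) (shiftIdx_ne_zero _ _)
  rw [orbitPt_eq_zpow_smul, orbitPt_eq_zpow_smul, orbitExp_orbitIdx] at hle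
  rw [orbitPt_eq_zpow_smul, orbitPt_eq_zpow_smul, shiftIdx, orbitExp_orbitIdx, hdist, hdist,
    add_sub_cancel_right]
  exact hle

lemma IsIndexFun.apply_zpow_smul {ξ : G} {O : X} {jx : X → ℤ} (hjx : IsIndexFun ξ O jx)
    (hiso : IsomAction G X) (t : ℤ) (y : X) : jx ((ξ ^ t) • y) = shiftIdx t (jx y) := by
  have hle : jx ((ξ ^ t) • y) ≤ shiftIdx t (jx y) :=
    (hjx _).2.2 _ (shiftIdx_ne_zero _ _) (zpow_smul_mem_vorCell hiso (hjx y).2.1 t)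
  have hge : jx y ≤ shiftIdx (-t) (jx ((ξ ^ t) • y)) := by
    have hmem := zpow_smul_mem_vorCell hiso (hjx ((ξ ^ t) • y)).2.1 (-t)
    rw [smul_smul, ← zpow_add, neg_add_cancel, zpow_zero, one_smul] at hmem
    exact (hjx y).2.2 _ (shiftIdx_ne_zero _ _) hmem
  refine le_antisymm hle ?_
  calc shiftIdx t (jx y) ≤ shiftIdx t (shiftIdx (-t) (jx ((ξ ^ t) • y))) := shiftIdx_mono t hge
    _ = jx ((ξ ^ t) • y) := shiftIdx_shiftIdx_neg t (hjx _).1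

variable {ξ : G} {O : X} {jx : X → ℤ}

lemma IsIndexFun.symmElem_index_of_pos (hjx : IsIndexFun ξ O jx) (hiso : IsomAction G X)
    {β : G} (hβ : 0 < jx (β • O)) : jx (symmElem ξ O jx β • O) = -jx (β • O) - 2 := by
  rw [symmElem, if_pos hβ, mul_smul, hjx.apply_zpow_smul hiso]
  unfold shiftIdx orbitIdx orbitExp; split_ifs <;> omega

lemma IsIndexFun.symmElem_index_of_neg (hjx : IsIndexFun ξ O jx) (hiso : IsomAction G X)
    {β : G} (hβ : jx (β • O) < 0) : jx (symmElem ξ O jx β • O) = -jx (β • O) + 2 := by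
  rw [symmElem, if_neg hβ.not_gt, mul_smul, hjx.apply_zpow_smul hiso]
  unfold shiftIdx orbitIdx orbitExp; split_ifs <;> omega

lemma IsIndexFun.index_eq_of_symmElem_eq (hjx : IsIndexFun ξ O jx) (hiso : IsomAction G X)
    {β β' : G} (hsgn : 0 < jx (β • O) ↔ 0 < jx (β' • O))
    (heq : symmElem ξ O jx β = symmElem ξ O jx β') : jx (β • O) = jx (β' • O) := by
  have hidx := congrArg (fun γ : G => jx (γ • O)) heq
  by_cases hβ : 0 < jx (β • O)
  · rw [hjx.symmElem_index_of_pos hiso hβ, hjx.symmElem_index_of_pos hiso (hsgn.mp hβ)] at hidx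
    omega
  · have hneg : ∀ γ : G, ¬0 < jx (γ • O) → jx (γ • O) < 0 := fun γ h =>
      lt_of_le_of_ne (not_lt.mp h) (hjx _).1
    rw [hjx.symmElem_index_of_neg hiso (hneg β hβ),
      hjx.symmElem_index_of_neg hiso (hneg β' (hsgn.not.mp hβ))] at hidx
    omega

end VoronoiCells

theorem stmt14_general {G X : Type*} [Group G] [MetricSpace X] [MulAction G X]
    (hiso : IsomAction G X)
    (ξ : G)
    (O : X)
    (jx : X → ℤ) (hjx : IsIndexFun ξ O jx) :
    (∀ β : G,
      (0 < jx (β • O) →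
        symmElem ξ O jx β • O ∈ vorCell ξ O (-(jx (β • O)) - 2) ∧
        jx (symmElem ξ O jx β • O) < 0) ∧
      (jx (β • O) < 0 →
        symmElem ξ O jx β • O ∈ vorCell ξ O (-(jx (β • O)) + 2) ∧
        0 < jx (symmElem ξ O jx β • O))) ∧
    (∀ β β' : G, (0 < jx (β • O) ↔ 0 < jx (β' • O)) →
      symmElem ξ O jx β = symmElem ξ O jx β' → β = β') := by
  refine ⟨fun β => ⟨fun hβ => ?_, fun hβ => ?_⟩, fun β β' hsgn heq => ?_⟩
  · have hidx := hjx.symmElem_index_of_pos hiso hβ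
    exact ⟨hidx ▸ (hjx _).2.1, by omega⟩
  · have hidx := hjx.symmElem_index_of_neg hiso hβ
    exact ⟨hidx ▸ (hjx _).2.1, by omega⟩
  · have hj := hjx.index_eq_of_symmElem_eq hiso hsgn heq
    unfold symmElem at heq
    rw [hj] at heq
    split_ifs at heq <;> exact mul_left_cancel heq

/-- Properties of the symmetric element `β₋`: (1) `β₋(O) ∈ D_{−j−2}` if
`j = j(β) > 0` and `β₋(O) ∈ D_{−j+2}` if `j < 0`, so `β` and `β₋` have opposite
signs; (2) `β ↦ β₋` is injective on elements of a fixed sign. -/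
theorem stmt14 {G X : Type*} [Group G] [MetricSpace X] [MulAction G X]
    [ProperSpace X] (δ ε L : ℝ)
    (hδ : 0 < δ) (hε : 0 < ε) (hεδ : ε < δ)
    (hyp : FourPointHyp X δ) (hgeo : IsGeodesicSpace X)
    (hiso : IsomAction G X)
    (ξ : G) (hhyp : IsHypElem X ξ) (τ : ℝ → X) (hax : IsAxisAct ξ τ)
    (hL : L = ⨅ x : X, dist x (ξ • x)) (hL300 : 300 * δ ≤ L)
    (O : X) (hO : dist O (ξ • O) ≤ L + ε)
    (jx : X → ℤ) (hjx : IsIndexFun ξ O jx) :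
    (∀ β : G,
      (0 < jx (β • O) →
        symmElem ξ O jx β • O ∈ vorCell ξ O (-(jx (β • O)) - 2) ∧
        jx (symmElem ξ O jx β • O) < 0) ∧
      (jx (β • O) < 0 →
        symmElem ξ O jx β • O ∈ vorCell ξ O (-(jx (β • O)) + 2) ∧
        0 < jx (symmElem ξ O jx β • O))) ∧
    (∀ β β' : G, (0 < jx (β • O) ↔ 0 < jx (β' • O)) →
      symmElem ξ O jx β = symmElem ξ O jx β' → β = β') :=
  stmt14_general hiso ξ O jx hjx
end

section
/- With β₋ the symmetric element of β ∈ G, one has |‖β₋‖ − ‖β‖| ≤ Δ₋ where Δ₋ = 8L + 464δ + 8ε ≤ 10L, with ‖γ‖ = |O γ(O)|. -/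
open Metric Set
open scoped Classical

lemma hyp_ineq4 {X : Type*} [MetricSpace X] {δ : ℝ} (hyp : FourPointHyp X δ)
    (x y z w : X) :
    min (dist x w + dist y w - dist x y) (dist y w + dist z w - dist y z) - 2*δ
      ≤ dist x w + dist z w - dist x z := by
  have h := hyp x z y w
  have hml := min_le_left (dist x w + dist y w - dist x y) (dist y w + dist z w - dist y z)
  have hmr := min_le_right (dist x w + dist y w - dist x y) (dist y w + dist z w - dist y z)
  have hc : dist z y = dist y z := dist_comm z y
  rcases max_cases (dist x y + dist z w) (dist z y + dist x w) with ⟨h1, -⟩ | ⟨h1, -⟩ <;>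
      rw [h1] at h
  · linarith
  · linarith

lemma core_vor {X : Type*} [MetricSpace X] {δ ε : ℝ} (hyp : FourPointHyp X δ)
    (a z m y : X)
    (h1 : dist y m ≤ dist y z)
    (h2 : dist a z + dist z m - (ε + 6*δ) ≤ dist a m)
    (h3 : ε + 8*δ < dist z m) :
    dist a m + dist m y - dist a y ≤ dist z m + 2*δ := by
  have h := hyp y z m a
  have c1 : dist m a = dist a m := dist_comm m a
  have c2 : dist m y = dist y m := dist_comm m y
  have c3 : dist a y = dist y a := dist_comm a y
  have c4 : dist z a = dist a z := dist_comm z a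
  rcases max_cases (dist y m + dist z a) (dist z m + dist y a) with ⟨hm, -⟩ | ⟨hm, -⟩ <;>
      rw [hm] at h <;> linarith

/-- The symmetric element almost preserves the norm `‖γ‖ = |O γ(O)|`:
`|‖β₋‖ − ‖β‖| ≤ Δ₋ = 8L + 464δ + 8ε`. -/
theorem stmt15 {G X : Type*} [Group G] [MetricSpace X] [MulAction G X]
    [ProperSpace X] (δ ε L : ℝ)
    (hδ : 0 < δ) (hε : 0 < ε) (hεδ : ε < δ)
    (hyp : FourPointHyp X δ) (hgeo : IsGeodesicSpace X)
    (hiso : IsomAction G X)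
    (ξ : G) (hhyp : IsHypElem X ξ) (τ : ℝ → X) (hax : IsAxisAct ξ τ)
    (hL : L = ⨅ x : X, dist x (ξ • x)) (hL300 : 300 * δ ≤ L)
    (O : X) (hO : dist O (ξ • O) ≤ L + ε)
    (jx : X → ℤ) (hjx : IsIndexFun ξ O jx) :
    ∀ β : G,
      |dist O (symmElem ξ O jx β • O) - dist O (β • O)| ≤ 8 * L + 464 * δ + 8 * ε := by
  intro β
  have hL0 : 0 < L := by linarith
  -- displacement lower bound
  have hdisp : ∀ x : X, L ≤ dist x (ξ • x) := by
    intro x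
    rw [hL]
    exact ciInf_le ⟨0, by rintro r ⟨x', rfl⟩; exact dist_nonneg⟩ x
  obtain ⟨g, hg⟩ : ∃ g : ℤ → X, ∀ n, g n = (ξ ^ n) • O := ⟨_, fun _ => rfl⟩
  obtain ⟨Dn, hDn⟩ : ∃ Dn : ℤ → ℝ, ∀ n, Dn n = dist O (g n) := ⟨_, fun _ => rfl⟩
  obtain ⟨D, hD⟩ : ∃ D : ℝ, D = dist O (ξ • O) := ⟨_, rfl⟩
  have hDL : L ≤ D := hD ▸ hdisp O
  have hDU : D ≤ L + ε := hD ▸ hO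
  have hg0 : g 0 = O := by rw [hg, zpow_zero, one_smul]
  have hgdist : ∀ a b : ℤ, dist (g a) (g b) = Dn (b - a) := by
    intro a b
    have h := hiso (ξ ^ (-a)) (g a) (g b)
    rw [← h, hg, hg, smul_smul, smul_smul, ← zpow_add, ← zpow_add, hDn, hg]
    have e1 : -a + a = 0 := by ring
    have e2 : -a + b = b - a := by ring
    rw [e1, e2, zpow_zero, one_smul]
  have hDsym : ∀ n : ℤ, Dn (-n) = Dn n := by
    intro n
    have h1 : dist (g n) (g 0) = Dn (0 - n) := hgdist n 0
    rw [hg0, dist_comm, zero_sub] at h1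
    rw [← h1, hDn]
  have hDn1 : Dn 1 = D := by rw [hDn, hg, zpow_one, hD]
  have hgdist' : ∀ a : ℤ, dist (g a) (g (a+1)) = D := by
    intro a
    rw [hgdist]
    have : a + 1 - a = 1 := by ring
    rw [this, hDn1]
  -- local thinness at each orbit vertex
  have hlocal : 2 * D - Dn 2 ≤ ε + 4 * δ := by
    obtain ⟨s, f, hf0, hfD, hf, -⟩ := hgeo O (ξ • O)
    have hD0 : (0:ℝ) ≤ D := le_trans hL0.le hDL
    have hmem0 : (0:ℝ) ∈ Icc (0:ℝ) (dist O (ξ • O)) := ⟨le_refl _, dist_nonneg⟩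
    have hmemh : D/2 ∈ Icc (0:ℝ) (dist O (ξ • O)) := by
      rw [← hD]; constructor <;> linarith
    have hmemD : dist O (ξ • O) ∈ Icc (0:ℝ) (dist O (ξ • O)) := ⟨dist_nonneg, le_refl _⟩
    have hOm : dist O (f (D/2)) = D / 2 := by
      rw [← hf0, hf 0 hmem0 (D/2) hmemh, zero_sub, abs_neg, abs_of_nonneg (by linarith)]
    have hmxi : dist (f (D/2)) (ξ • O) = D / 2 := by
      rw [← hfD, hf (D/2) hmemh (dist O (ξ • O)) hmemD, ← hD,
        abs_of_nonpos (by linarith)]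
      ring
    have hxm' : dist (ξ • O) (ξ • f (D/2)) = D / 2 := by
      rw [hiso ξ O (f (D/2))]; exact hOm
    have hm'2 : dist (ξ • f (D/2)) (g 2) = D / 2 := by
      have hg2 : g 2 = ξ • (ξ • O) := by
        rw [hg, show (2:ℤ) = 1 + 1 from rfl, zpow_add, zpow_one, mul_smul]
      rw [hg2, hiso ξ (f (D/2)) (ξ • O)]
      exact hmxi
    have hmm' : L ≤ dist (f (D/2)) (ξ • f (D/2)) := hdisp _
    have hg1 : g 1 = ξ • O := by rw [hg, zpow_one]
    have hg2x : dist (g 2) (ξ • O) = D := by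
      rw [← hg1, hgdist]
      have : (1:ℤ) - 2 = -1 := by ring
      rw [this, hDsym 1, hDn1]
    have hOx : dist O (ξ • O) = D := hD.symm
    -- step 1 : Gromov product of O and ξ•m at ξ•O is small
    have step1 : dist O (ξ • O) + dist (ξ • f (D/2)) (ξ • O) - dist O (ξ • f (D/2))
        ≤ ε + 2*δ := by
      have h := hyp_ineq4 hyp (f (D/2)) O (ξ • f (D/2)) (ξ • O)
      have hmO : dist (f (D/2)) O = D/2 := by rw [dist_comm]; exact hOm
      have hm'w : dist (ξ • f (D/2)) (ξ • O) = D/2 := by rw [dist_comm]; exact hxm'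
      have hEmm : dist (f (D/2)) (ξ • O) + dist (ξ • f (D/2)) (ξ • O)
          - dist (f (D/2)) (ξ • f (D/2)) ≤ ε := by
        rw [hmxi, hm'w]; linarith
      rcases le_total (dist (f (D/2)) (ξ • O) + dist O (ξ • O) - dist (f (D/2)) O)
          (dist O (ξ • O) + dist (ξ • f (D/2)) (ξ • O) - dist O (ξ • f (D/2))) with hc | hc
      · rw [min_eq_left hc, hmxi, hmO, hOx] at h
        exfalso; linarith
      · rw [min_eq_right hc] at h
        linarith
    -- step 2 : Gromov product of O and ξ²O at ξ•O is small
    have h := hyp_ineq4 hyp O (g 2) (ξ • f (D/2)) (ξ • O)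
    have hm'w : dist (ξ • f (D/2)) (ξ • O) = D/2 := by rw [dist_comm]; exact hxm'
    have hE2 : dist (g 2) (ξ • O) + dist (ξ • f (D/2)) (ξ • O)
        - dist (g 2) (ξ • f (D/2)) = D := by
      rw [hm'w, hg2x, dist_comm (g 2) (ξ • f (D/2)), hm'2]; ring
    have hO2 : dist O (g 2) = Dn 2 := by rw [hDn]
    rcases le_total (dist O (ξ • O) + dist (g 2) (ξ • O) - dist O (g 2))
        (dist (g 2) (ξ • O) + dist (ξ • f (D/2)) (ξ • O) - dist (g 2) (ξ • f (D/2)))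
        with hc | hc
    · rw [min_eq_left hc] at h
      rw [hOx, hg2x, hO2] at h
      linarith
    · rw [min_eq_right hc, hE2] at h
      exfalso; linarith
  -- chain lemma : orbit is a quasigeodesic
  have hchain : ∀ n : ℤ, 2 ≤ n → Dn (n-1) + D - (ε + 6*δ) ≤ Dn n := by
    refine Int.le_induction ?_ ?_
    · have e : (2:ℤ) - 1 = 1 := by ring
      rw [e, hDn1]
      linarith
    · intro n hn ih
      have e : n + 1 - 1 = n := by ring
      rw [e]
      have h := hyp_ineq4 hyp (g (n+1)) (g 0) (g (n-1)) (g n)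
      have e1 : dist (g (n+1)) (g n) = D := by
        rw [hgdist, show n - (n+1) = -1 by ring, hDsym 1, hDn1]
      have e2 : dist (g 0) (g n) = Dn n := by
        rw [hgdist, sub_zero]
      have e3 : dist (g (n+1)) (g 0) = Dn (n+1) := by
        rw [hgdist, zero_sub, hDsym]
      have e4 : dist (g (n-1)) (g n) = D := by
        rw [hgdist, show n - (n-1) = 1 by ring, hDn1]
      have e5 : dist (g (n+1)) (g (n-1)) = Dn 2 := by
        rw [hgdist, show n - 1 - (n+1) = -2 by ring, hDsym 2]
      have e6 : dist (g 0) (g (n-1)) = Dn (n-1) := by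
        rw [hgdist, sub_zero]
      rw [e1, e2, e3, e4, e5, e6] at h
      rcases le_total (D + Dn n - Dn (n+1)) (Dn n + D - Dn (n-1)) with hc | hc
      · rw [min_eq_left hc] at h
        linarith
      · rw [min_eq_right hc] at h
        exfalso; linarith
  -- Gromov product bound from the Voronoi property
  have hEbound : ∀ (w : X) (k : ℤ), (∀ c : ℤ, dist w (g k) ≤ dist w (g c)) →
      ∀ p : ℤ, dist (g p) (g k) + dist (g k) w - dist (g p) w ≤ D + 2*δ := by
    intro w k hw p
    have hzm1 : dist (g (k-1)) (g k) = D := by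
      rw [hgdist, show k - (k-1) = 1 by ring, hDn1]
    have hzm2 : dist (g (k+1)) (g k) = D := by
      rw [hgdist, show k - (k+1) = -1 by ring, hDsym 1, hDn1]
    rcases lt_trichotomy p k with hpk | hpk | hpk
    · by_cases hp1 : p = k - 1
      · subst hp1
        have h1 := hw (k-1)
        have c1 : dist (g k) w = dist w (g k) := dist_comm _ _
        have c2 : dist (g (k-1)) w = dist w (g (k-1)) := dist_comm _ _
        rw [hzm1]
        linarith
      · have hp2 : p ≤ k - 2 := by omega
        rw [← hzm1]
        apply core_vor (ε := ε) hyp (g p) (g (k-1)) (g k) w (hw (k-1))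
        · have hc : dist (g p) (g (k-1)) = Dn (k - p - 1) := by
            rw [hgdist, show k - 1 - p = k - p - 1 by ring]
          rw [hc, hzm1, hgdist]
          have := hchain (k - p) (by omega)
          rw [show k - p - 1 = k - p - 1 from rfl] at this
          linarith [this]
        · rw [hzm1]; linarith
    · subst hpk
      rw [dist_self]
      have c1 : dist (g p) w = dist w (g p) := dist_comm _ _
      linarith [dist_nonneg (x := g p) (y := w)]
    · by_cases hp1 : p = k + 1
      · subst hp1
        have h1 := hw (k+1)
        have c1 : dist (g k) w = dist w (g k) := dist_comm _ _
        have c2 : dist (g (k+1)) w = dist w (g (k+1)) := dist_comm _ _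
        rw [hzm2]
        linarith
      · have hp2 : k + 2 ≤ p := by omega
        rw [← hzm2]
        apply core_vor (ε := ε) hyp (g p) (g (k+1)) (g k) w (hw (k+1))
        · have hc : dist (g p) (g (k+1)) = Dn (p - k - 1) := by
            rw [hgdist, show k + 1 - p = -(p - k - 1) by ring, hDsym]
          have hc2 : dist (g p) (g k) = Dn (p - k) := by
            rw [hgdist, show k - p = -(p - k) by ring, hDsym]
          rw [hc, hzm2, hc2]
          have := hchain (p - k) (by omega)
          linarith [this]
        · rw [hzm2]; linarith
  -- upper bound Dn 3 ≤ 3D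
  have hD3 : Dn 3 ≤ 3 * D := by
    have t := dist_triangle4 O (g 1) (g 2) (g 3)
    have u1 : dist O (g 1) = D := by rw [← hDn, hDn1]
    have u2 : dist (g 1) (g 2) = D := by
      rw [hgdist, show (2:ℤ) - 1 = 1 by norm_num, hDn1]
    have u3 : dist (g 2) (g 3) = D := by
      rw [hgdist, show (3:ℤ) - 2 = 1 by norm_num, hDn1]
    rw [u1, u2, u3, ← hDn] at t
    linarith
  -- instantiate at β
  obtain ⟨j, hjdef⟩ : ∃ j : ℤ, jx (β • O) = j := ⟨_, rfl⟩
  have hj0 : j ≠ 0 := hjdef ▸ (hjx (β • O)).1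
  have hmem := (hjx (β • O)).2.1
  rw [hjdef] at hmem
  have horbA : ∀ c : ℤ, 0 ≤ c → orbitPt ξ O (c+1) = g c := by
    intro c hc
    unfold orbitPt
    rw [if_pos (show (0:ℤ) < c + 1 by omega), show c + 1 - 1 = c by ring, hg]
  have horbB : ∀ c : ℤ, c < 0 → orbitPt ξ O c = g c := by
    intro c hc
    unfold orbitPt
    rw [if_neg (show ¬ (0:ℤ) < c by omega), hg]
  rcases lt_or_ge 0 j with hjpos | hjle
  · -- j > 0 : cell center is g (j-1), symmetric element lands at g (2j+1)
    have hkorb : orbitPt ξ O j = g (j-1) := by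
      unfold orbitPt
      rw [if_pos hjpos, hg]
    have hyAll : ∀ c : ℤ, dist (β • O) (g (j-1)) ≤ dist (β • O) (g c) := by
      intro c
      rcases le_or_gt 0 c with hc | hc
      · have h := hmem (c+1) (by omega)
        rwa [hkorb, horbA c hc] at h
      · have h := hmem c (by omega)
        rwa [hkorb, horbB c hc] at h
    have hnorm : dist O (symmElem ξ O jx β • O) = dist (g (2*j+1)) (β • O) := by
      unfold symmElem
      rw [hjdef, if_pos hjpos, mul_smul]
      have h := hiso (ξ ^ (2*j+1)) O ((ξ ^ (-2*j-1)) • (β • O))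
      rw [smul_smul, ← zpow_add, show 2*j+1 + (-2*j-1) = 0 by ring,
        zpow_zero, one_smul] at h
      rw [← h, hg]
    have P1 := hEbound (β • O) (j-1) hyAll 0
    have P2 := hEbound (β • O) (j-1) hyAll (2*j+1)
    have T1 : dist (g (2*j+1)) (β • O)
        ≤ dist (g (2*j+1)) (g (j-1)) + dist (g (j-1)) (β • O) := dist_triangle _ _ _
    have T2 : dist (g 0) (β • O)
        ≤ dist (g 0) (g (j-1)) + dist (g (j-1)) (β • O) := dist_triangle _ _ _
    have hA1 : dist (g 0) (g (j-1)) = Dn (j-1) := by rw [hgdist, sub_zero]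
    have hA2 : dist (g (2*j+1)) (g (j-1)) = Dn (j+2) := by
      rw [hgdist, show j - 1 - (2*j+1) = -(j+2) by ring, hDsym]
    have hAd : |Dn (j+2) - Dn (j-1)| ≤ 3*D := by
      have h := abs_dist_sub_le (g (j+2)) (g (j-1)) O
      have e1 : dist (g (j+2)) O = Dn (j+2) := by rw [dist_comm, hDn]
      have e2 : dist (g (j-1)) O = Dn (j-1) := by rw [dist_comm, hDn]
      have e3 : dist (g (j+2)) (g (j-1)) = Dn 3 := by
        rw [hgdist, show j - 1 - (j+2) = -3 by ring, hDsym 3]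
      rw [e1, e2, e3] at h
      exact h.trans hD3
    have habs := abs_le.mp hAd
    rw [hnorm, show dist O (β • O) = dist (g 0) (β • O) by rw [hg0], abs_sub_le_iff]
    rw [hA1] at P1 T2
    rw [hA2] at P2 T1
    constructor
    · linarith [habs.2]
    · linarith [habs.1]
  · -- j < 0 : cell center is g j, symmetric element lands at g (2j-1)
    have hjneg : j < 0 := by omega
    have hkorb : orbitPt ξ O j = g j := horbB j hjneg
    have hyAll : ∀ c : ℤ, dist (β • O) (g j) ≤ dist (β • O) (g c) := by
      intro c
      rcases le_or_gt 0 c with hc | hc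
      · have h := hmem (c+1) (by omega)
        rwa [hkorb, horbA c hc] at h
      · have h := hmem c (by omega)
        rwa [hkorb, horbB c hc] at h
    have hnorm : dist O (symmElem ξ O jx β • O) = dist (g (2*j-1)) (β • O) := by
      unfold symmElem
      rw [hjdef, if_neg (show ¬ 0 < j by omega), mul_smul]
      have h := hiso (ξ ^ (2*j-1)) O ((ξ ^ (-2*j+1)) • (β • O))
      rw [smul_smul, ← zpow_add, show 2*j-1 + (-2*j+1) = 0 by ring,
        zpow_zero, one_smul] at h
      rw [← h, hg]
    have P1 := hEbound (β • O) j hyAll 0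
    have P2 := hEbound (β • O) j hyAll (2*j-1)
    have T1 : dist (g (2*j-1)) (β • O)
        ≤ dist (g (2*j-1)) (g j) + dist (g j) (β • O) := dist_triangle _ _ _
    have T2 : dist (g 0) (β • O)
        ≤ dist (g 0) (g j) + dist (g j) (β • O) := dist_triangle _ _ _
    have hA1 : dist (g 0) (g j) = Dn j := by rw [hgdist, sub_zero]
    have hA2 : dist (g (2*j-1)) (g j) = Dn (1-j) := by
      rw [hgdist, show j - (2*j-1) = 1 - j by ring]
    have hAd : |Dn (1-j) - Dn j| ≤ 3*D := by
      have h := abs_dist_sub_le (g (1-j)) (g (-j)) O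
      have e1 : dist (g (1-j)) O = Dn (1-j) := by rw [dist_comm, hDn]
      have e2 : dist (g (-j)) O = Dn j := by rw [dist_comm, ← hDn, hDsym j]
      have e3 : dist (g (1-j)) (g (-j)) = D := by
        rw [hgdist, show -j - (1-j) = -1 by ring, hDsym 1, hDn1]
      rw [e1, e2, e3] at h
      have : D ≤ 3*D := by linarith
      exact h.trans this
    have habs := abs_le.mp hAd
    rw [hnorm, show dist O (β • O) = dist (g 0) (β • O) by rw [hg0], abs_sub_le_iff]
    rw [hA1] at P1 T2
    rw [hA2] at P2 T1
    constructor
    · linarith [habs.2]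
    · linarith [habs.1]
end

section
/- Define the twisted product α⋆β = αβ₊ if D₁ or D₋₁ separates α⁻¹(O) and β(O), and α⋆β = αβ₋ otherwise. Then ‖α⋆β‖ is within Δ⋆ = 12L + 758δ + 12ε ≤ 20L of ‖α‖ + ‖β‖, i.e., |‖α⋆β‖ − (‖α‖ + ‖β‖)| ≤ Δ⋆. -/
open Metric Set
open scoped Classical

/-! Since `L` is the minimal displacement of `ξ` and `ξ` moves `O` by at most `L + ε`, the orbit
`a ↦ ξᵃ(O)` turns by a Gromov product at most `2δ + ε/2` at each of its points. By the four-point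
condition such a chain with steps `≥ L ≫ δ` behaves like a geodesic: distances grow by almost `L`
per step, and seen from an orbit point, orbit points on its two sides have Gromov product `O(δ)`.
Hence if the nearest orbit points of `v` and `z` lie strictly on opposite sides of `ξˢ(O)` with
`|s| ≤ 2`, then `|vz| = |Ov| + |Oz| + O(L)`.

As `‖αγ‖ = |α⁻¹(O) γ(O)|`, this settles the case where `D_{±1}` separate `α⁻¹(O)` and `β(O)`.
Otherwise `β₋ = ξᵗβ` moves the nearest orbit index `q` of `β(O)` across `O`, which creates the
separation, and `‖β₋‖ = |ξ⁻ᵗ(O) β(O)|` differs from `‖β‖` by `O(L)` because `ξ⁻ᵗ(O)` and `O` lie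
almost symmetrically about the nearest orbit point `ξ^q(O)` of `β(O)`. -/

section GromovProduct

variable {X : Type*}

noncomputable def gromovProduct [PseudoMetricSpace X] (w x y : X) : ℝ :=
  (dist w x + dist w y - dist x y) / 2

section Pseudo

variable [PseudoMetricSpace X]

lemma gromovProduct_comm (w x y : X) : gromovProduct w x y = gromovProduct w y x := by
  unfold gromovProduct; rw [dist_comm x y]; ring

lemma gromovProduct_nonneg (w x y : X) : 0 ≤ gromovProduct w x y := by
  unfold gromovProduct; linarith [dist_triangle_left x y w]

lemma gromovProduct_self_left (w y : X) : gromovProduct w w y = 0 := by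
  simp [gromovProduct]

lemma dist_eq_sub_gromovProduct (w x y : X) :
    dist x y = dist w x + dist w y - 2 * gromovProduct w x y := by
  unfold gromovProduct; ring

lemma Isometry.gromovProduct_eq {Y : Type*} [PseudoMetricSpace Y] {f : X → Y} (hf : Isometry f)
    (w x y : X) : gromovProduct (f w) (f x) (f y) = gromovProduct w x y := by
  simp only [gromovProduct, hf.dist_eq]

end Pseudo

namespace FourPointHyp

variable [MetricSpace X] {δ : ℝ}

lemma nonneg (hyp : FourPointHyp X δ) (x : X) : 0 ≤ δ := by
  simpa using hyp x x x x

lemma min_sub_le_gromovProduct (hyp : FourPointHyp X δ) (w x y z : X) :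
    min (gromovProduct w x z) (gromovProduct w z y) - δ ≤ gromovProduct w x y := by
  have h : dist x y + dist w z - 2 * δ ≤ max (dist x z + dist w y) (dist y z + dist w x) := by
    have := hyp x y z w
    rw [dist_comm z w, dist_comm y w, dist_comm x w] at this
    linarith
  rcases le_max_iff.mp h with h | h
  · have := min_le_left (gromovProduct w x z) (gromovProduct w z y)
    unfold gromovProduct at *; linarith
  · have := min_le_right (gromovProduct w x z) (gromovProduct w z y)
    unfold gromovProduct at *; linarith [dist_comm y z]

lemma gromovProduct_le_of_lt (hyp : FourPointHyp X δ) {w x y z : X} {c : ℝ}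
    (hxy : gromovProduct w x y ≤ c) (hxz : c + δ < gromovProduct w x z) :
    gromovProduct w z y ≤ c + δ := by
  have h := hyp.min_sub_le_gromovProduct w x y z
  rcases min_le_iff.mp (show min (gromovProduct w x z) (gromovProduct w z y) ≤ c + δ by linarith)
    with h' | h'
  · linarith
  · exact h'

end FourPointHyp

end GromovProduct

lemma IsGeodesicSpace.exists_dist_eq {X : Type*} [MetricSpace X] (hgeo : IsGeodesicSpace X)
    (a b : X) {t : ℝ} (ht₀ : 0 ≤ t) (ht : t ≤ dist a b) :
    ∃ p, dist a p = t ∧ dist p b = dist a b - t := by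
  obtain ⟨-, f, hf0, hfb, hf, -⟩ := hgeo a b
  have hmem : t ∈ Icc 0 (dist a b) := ⟨ht₀, ht⟩
  refine ⟨f t, ?_, ?_⟩
  · calc dist a (f t) = dist (f 0) (f t) := by rw [hf0]
      _ = t := by
        rw [hf 0 ⟨le_rfl, dist_nonneg⟩ t hmem, zero_sub, abs_neg, abs_of_nonneg ht₀]
  · calc dist (f t) b = dist (f t) (f (dist a b)) := by rw [hfb]
      _ = dist a b - t := by
        rw [hf t hmem _ ⟨dist_nonneg, le_rfl⟩, abs_sub_comm, abs_of_nonneg (by linarith)]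

/-- `O` is moved almost as little as any point, so `O, gO, g²O` are almost aligned: otherwise the
point `P ∈ [O, gO]` at distance `t = min (|O gO| / 2) (O | g²O)_{gO}` from `O` would satisfy
`|P gP| ≤ |O gO| - 2t + 4δ < L`. -/
lemma FourPointHyp.gromovProduct_le_of_forall_le_dist {X : Type*} [MetricSpace X] {δ : ℝ}
    (hyp : FourPointHyp X δ) (hgeo : IsGeodesicSpace X) {g : X → X} (hg : Isometry g)
    {L ε : ℝ} (hdisp : ∀ x, L ≤ dist x (g x)) {O : X} (hO : dist O (g O) ≤ L + ε)
    (hL : 4 * δ + ε < L) :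
    gromovProduct (g O) O (g (g O)) ≤ 2 * δ + ε / 2 := by
  set D := dist O (g O)
  set σ := gromovProduct (g O) O (g (g O))
  set t := min (D / 2) σ
  have hD : L ≤ D := hdisp O
  have hδ := hyp.nonneg O
  have htD : t ≤ D / 2 := min_le_left _ _
  have htσ : t ≤ σ := min_le_right _ _
  have ht₀ : 0 ≤ t := le_min (by linarith) (gromovProduct_nonneg _ _ _)
  obtain ⟨P, hOP, hPg⟩ := hgeo.exists_dist_eq O (g O) ht₀ (by linarith)
  have hPO : gromovProduct (g O) P O = D - t := by
    unfold gromovProduct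
    rw [dist_comm (g O) P, hPg, dist_comm (g O) O, dist_comm P O, hOP]; ring
  have hgP : gromovProduct (g O) (g (g O)) (g P) = t := by
    rw [gromovProduct_comm, hg.gromovProduct_eq]
    unfold gromovProduct
    rw [hOP, hPg]; ring
  have h1 := hyp.min_sub_le_gromovProduct (g O) P (g (g O)) O
  have h2 := hyp.min_sub_le_gromovProduct (g O) P (g P) (g (g O))
  rw [hPO] at h1
  rw [hgP] at h2
  have hPgg : t - δ ≤ gromovProduct (g O) P (g (g O)) := by
    linarith [le_min (show t ≤ D - t by linarith) htσ]
  have hPgP : t - 2 * δ ≤ gromovProduct (g O) P (g P) := by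
    linarith [le_min hPgg (show t - δ ≤ t by linarith)]
  have hdist := dist_eq_sub_gromovProduct (g O) P (g P)
  rw [dist_comm (g O) P, hPg, hg.dist_eq, hOP] at hdist
  have ht : t ≤ 2 * δ + ε / 2 := by linarith [hdisp P]
  rcases min_le_iff.mp ht with h | h
  · linarith
  · exact h

section StraightChain

variable {X : Type*} [MetricSpace X]

structure IsStraightChain (u : ℤ → X) (D ρ : ℝ) : Prop where
  le_dist_succ : ∀ k, D ≤ dist (u k) (u (k + 1))
  gromovProduct_le : ∀ k, gromovProduct (u k) (u (k - 1)) (u (k + 1)) ≤ ρ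

def IsNearestIndex (u : ℤ → X) (y : X) (b : ℤ) : Prop :=
  ∀ a, dist y (u b) ≤ dist y (u a)

namespace IsStraightChain

variable {u : ℤ → X} {D ρ δ : ℝ}

lemma reverse (hu : IsStraightChain u D ρ) : IsStraightChain (fun k => u (-k)) D ρ where
  le_dist_succ k := by
    have := hu.le_dist_succ (-(k + 1))
    rwa [dist_comm, show -(k + 1) + 1 = -k by ring] at this
  gromovProduct_le k := by
    have := hu.gromovProduct_le (-k)
    rwa [gromovProduct_comm, show -k - 1 = -(k + 1) by ring, show -k + 1 = -(k - 1) by ring]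
      at this

lemma rho_nonneg (hu : IsStraightChain u D ρ) : 0 ≤ ρ :=
  (gromovProduct_nonneg _ _ _).trans (hu.gromovProduct_le 0)

lemma sub_le_gromovProduct_of_dist_add_le (hu : IsStraightChain u D ρ) {m c : ℤ}
    (hinc : dist (u m) (u (c - 1)) + (D - 2 * (ρ + δ)) ≤ dist (u m) (u c)) :
    D - (ρ + δ) ≤ gromovProduct (u c) (u (c - 1)) (u m) := by
  have := hu.le_dist_succ (c - 1)
  rw [sub_add_cancel] at this
  unfold gromovProduct
  linarith [dist_comm (u (c - 1)) (u c), dist_comm (u c) (u m), dist_comm (u (c - 1)) (u m)]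

lemma gromovProduct_le_of_dist_add_le (hu : IsStraightChain u D ρ) (hyp : FourPointHyp X δ)
    (hD : 2 * (ρ + δ) < D) {m c : ℤ}
    (hinc : dist (u m) (u (c - 1)) + (D - 2 * (ρ + δ)) ≤ dist (u m) (u c)) :
    gromovProduct (u c) (u m) (u (c + 1)) ≤ ρ + δ :=
  hyp.gromovProduct_le_of_lt (hu.gromovProduct_le c)
    (by linarith [hu.sub_le_gromovProduct_of_dist_add_le hinc])

lemma dist_add_le_dist_succ (hu : IsStraightChain u D ρ) (hyp : FourPointHyp X δ)
    (hD : 2 * (ρ + δ) < D) {m n : ℤ} (hmn : m ≤ n) :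
    dist (u m) (u n) + (D - 2 * (ρ + δ)) ≤ dist (u m) (u (n + 1)) := by
  induction n, hmn using Int.leInduction with
  | base =>
    rw [dist_self]
    linarith [hu.le_dist_succ m, hu.rho_nonneg, hyp.nonneg (u m)]
  | succ n _ ih =>
    have hturn := hu.gromovProduct_le_of_dist_add_le hyp hD (c := n + 1)
      (by rwa [add_sub_cancel_right])
    have := dist_eq_sub_gromovProduct (u (n + 1)) (u m) (u (n + 1 + 1))
    linarith [hu.le_dist_succ (n + 1), dist_comm (u (n + 1)) (u m)]

lemma gromovProduct_succ_le (hu : IsStraightChain u D ρ) (hyp : FourPointHyp X δ)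
    (hD : 2 * (ρ + δ) < D) {m c : ℤ} (hmc : m < c) :
    gromovProduct (u c) (u m) (u (c + 1)) ≤ ρ + δ :=
  hu.gromovProduct_le_of_dist_add_le hyp hD <| by
    simpa using hu.dist_add_le_dist_succ hyp hD (n := c - 1) (by omega)

lemma le_dist_of_ne (hu : IsStraightChain u D ρ) (hyp : FourPointHyp X δ)
    (hD : 2 * (ρ + δ) < D) {m n : ℤ} (hmn : m ≠ n) :
    D - 2 * (ρ + δ) ≤ dist (u m) (u n) := by
  wlog h : m < n generalizing m n
  · rw [dist_comm]; exact this hmn.symm (by omega)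
  have := hu.dist_add_le_dist_succ hyp hD (m := m) (n := n - 1) (by omega)
  rw [sub_add_cancel] at this
  linarith [dist_nonneg (x := u m) (y := u (n - 1))]

lemma gromovProduct_le_of_lt_of_lt (hu : IsStraightChain u D ρ) (hyp : FourPointHyp X δ)
    (hD : 2 * ρ + 3 * δ < D) {m c n : ℤ} (hmc : m < c) (hcn : c < n) :
    gromovProduct (u c) (u m) (u n) ≤ ρ + 2 * δ := by
  have hD' : 2 * (ρ + δ) < D := by linarith [hyp.nonneg (u c)]
  have hnear : gromovProduct (u c) (u (c - 1)) (u n) ≤ ρ + δ := by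
    have := hu.reverse.gromovProduct_succ_le hyp hD' (m := -n) (c := -c) (by omega)
    simp only [neg_neg, show -(-c + 1) = c - 1 by ring] at this
    rwa [gromovProduct_comm]
  have hfar := hu.sub_le_gromovProduct_of_dist_add_le (by
    simpa using hu.dist_add_le_dist_succ hyp hD' (m := m) (n := c - 1) (by omega))
  have := hyp.gromovProduct_le_of_lt hnear (by linarith)
  linarith

lemma gromovProduct_le_of_dist_le_pred (hu : IsStraightChain u D ρ) (hyp : FourPointHyp X δ)
    (hD : 2 * ρ + 4 * δ < D) {w : X} {a b : ℤ} (hw : dist w (u b) ≤ dist w (u (b - 1)))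
    (hab : a < b) :
    gromovProduct (u b) w (u a) ≤ dist (u b) (u (b - 1)) / 2 + δ := by
  have hclose : gromovProduct (u b) (u (b - 1)) w ≤ dist (u b) (u (b - 1)) / 2 := by
    unfold gromovProduct
    linarith [dist_comm w (u b), dist_comm w (u (b - 1))]
  have hfar : dist (u b) (u (b - 1)) / 2 + δ < gromovProduct (u b) (u (b - 1)) (u a) := by
    have := hu.dist_add_le_dist_succ hyp (by linarith [hyp.nonneg w]) (m := a) (n := b - 1)
      (by omega)
    rw [sub_add_cancel] at this
    unfold gromovProduct
    linarith [dist_comm (u b) (u a), dist_comm (u (b - 1)) (u a)]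
  rw [gromovProduct_comm]
  exact hyp.gromovProduct_le_of_lt hclose hfar

lemma gromovProduct_le_of_isNearestIndex (hu : IsStraightChain u D ρ) (hyp : FourPointHyp X δ)
    (hD : 2 * ρ + 4 * δ < D) {D' : ℝ} (hD' : ∀ k, dist (u k) (u (k + 1)) ≤ D') {w : X} {b : ℤ}
    (hw : IsNearestIndex u w b) (a : ℤ) :
    gromovProduct (u b) w (u a) ≤ D' / 2 + δ := by
  rcases lt_trichotomy a b with hab | rfl | hab
  · have := hD' (b - 1)
    rw [sub_add_cancel, dist_comm] at this
    linarith [hu.gromovProduct_le_of_dist_le_pred hyp hD (hw (b - 1)) hab]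
  · rw [gromovProduct_comm, gromovProduct_self_left]
    linarith [dist_nonneg.trans (hD' 0), hyp.nonneg w]
  · have hw' : dist w (u (-(-b))) ≤ dist w (u (-(-b - 1))) := by
      rw [neg_neg, show -(-b - 1) = b + 1 by ring]; exact hw (b + 1)
    have := hu.reverse.gromovProduct_le_of_dist_le_pred hyp hD hw' (a := -a) (by omega)
    simp only [neg_neg, show -(-b - 1) = b + 1 by ring] at this
    linarith [hD' b]

lemma abs_dist_sub_dist_le_of_isNearestIndex (hu : IsStraightChain u D ρ)
    (hyp : FourPointHyp X δ) (hD : 2 * ρ + 4 * δ < D) {D' : ℝ}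
    (hD' : ∀ k, dist (u k) (u (k + 1)) ≤ D') {w : X} {b : ℤ} (hw : IsNearestIndex u w b)
    (a a' : ℤ) :
    |dist w (u a) - dist w (u a')| ≤ |dist (u b) (u a) - dist (u b) (u a')| + D' + 2 * δ := by
  have h := hu.gromovProduct_le_of_isNearestIndex hyp hD hD' hw a
  have h' := hu.gromovProduct_le_of_isNearestIndex hyp hD hD' hw a'
  have e := dist_eq_sub_gromovProduct (u b) w (u a)
  have e' := dist_eq_sub_gromovProduct (u b) w (u a')
  have := gromovProduct_nonneg (u b) w (u a)
  have := gromovProduct_nonneg (u b) w (u a')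
  rw [abs_le]
  constructor <;>
    linarith [le_abs_self (dist (u b) (u a) - dist (u b) (u a')),
      neg_abs_le (dist (u b) (u a) - dist (u b) (u a'))]

/-- Seen from `u s`, `v` points towards `u p` and `z` towards `u q`, and these two directions are
almost opposite. -/
lemma gromovProduct_le_of_lt_of_lt_of_dist_le (hu : IsStraightChain u D ρ)
    (hyp : FourPointHyp X δ) (hD : 4 * ρ + 10 * δ < D) {v z : X} {p s q : ℤ}
    (hv : dist v (u p) ≤ dist v (u s)) (hz : dist z (u q) ≤ dist z (u s)) (hps : p < s)
    (hsq : s < q) :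
    gromovProduct (u s) v z ≤ ρ + 4 * δ := by
  have hδ := hyp.nonneg v
  have hρ := hu.rho_nonneg
  have hpq := hu.gromovProduct_le_of_lt_of_lt hyp (by linarith) hps hsq
  have hpv : (D - 2 * (ρ + δ)) / 2 ≤ gromovProduct (u s) (u p) v := by
    have := hu.le_dist_of_ne hyp (by linarith) hps.ne
    unfold gromovProduct
    linarith [dist_comm (u s) (u p), dist_comm v (u s), dist_comm v (u p)]
  have hqz : (D - 2 * (ρ + δ)) / 2 ≤ gromovProduct (u s) (u q) z := by
    have := hu.le_dist_of_ne hyp (by linarith) hsq.ne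
    unfold gromovProduct
    linarith [dist_comm z (u s), dist_comm z (u q)]
  have hvq := hyp.gromovProduct_le_of_lt hpq (by linarith)
  rw [gromovProduct_comm] at hvq
  have hzv := hyp.gromovProduct_le_of_lt (z := z) hvq (by linarith)
  rw [gromovProduct_comm] at hzv
  linarith

lemma abs_dist_sub_le_of_separated (hu : IsStraightChain u D ρ) (hyp : FourPointHyp X δ)
    (hD : 4 * ρ + 10 * δ < D) {v z : X} {p q s : ℤ} (hv : IsNearestIndex u v p)
    (hz : IsNearestIndex u z q) (hs : min p q < s ∧ s < max p q) (O : X) :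
    |dist v z - (dist O v + dist O z)| ≤ 2 * dist O (u s) + 2 * (ρ + 4 * δ) := by
  have hg : gromovProduct (u s) v z ≤ ρ + 4 * δ := by
    rcases le_total p q with h | h
    · rw [min_eq_left h, max_eq_right h] at hs
      exact hu.gromovProduct_le_of_lt_of_lt_of_dist_le hyp hD (hv s) (hz s) hs.1 hs.2
    · rw [min_eq_right h, max_eq_left h] at hs
      rw [gromovProduct_comm]
      exact hu.gromovProduct_le_of_lt_of_lt_of_dist_le hyp hD (hz s) (hv s) hs.1 hs.2
  have e := dist_eq_sub_gromovProduct (u s) v z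
  rw [abs_le]
  constructor
  · linarith [dist_triangle O (u s) v, dist_triangle O (u s) z]
  · linarith [dist_triangle v O z, dist_comm v O, gromovProduct_nonneg (u s) v z,
      dist_nonneg (x := O) (y := u s)]

end IsStraightChain

end StraightChain

namespace IsomAction

variable {G X : Type*} [Group G] [MetricSpace X] [MulAction G X]

lemma isometry_smul (hiso : IsomAction G X) (γ : G) : Isometry (γ • · : X → X) :=
  Isometry.of_dist_eq (hiso γ)

lemma dist_mul_smul (hiso : IsomAction G X) (α γ : G) (O : X) :
    dist O ((α * γ) • O) = dist (α⁻¹ • O) (γ • O) := by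
  rw [← hiso α⁻¹ O, mul_smul, inv_smul_smul]

lemma dist_zpow_smul (hiso : IsomAction G X) (ξ : G) (O : X) (a b : ℤ) :
    dist ((ξ ^ a) • O) ((ξ ^ b) • O) = dist O ((ξ ^ (b - a)) • O) := by
  rw [← hiso (ξ ^ a) O, smul_smul, ← zpow_add, add_sub_cancel]

lemma dist_zpow_smul_le (hiso : IsomAction G X) (ξ : G) (O : X) (k : ℤ) :
    dist O ((ξ ^ k) • O) ≤ k.natAbs * dist O (ξ • O) := by
  have hnat (n : ℕ) : dist O ((ξ ^ (n : ℤ)) • O) ≤ n * dist O (ξ • O) := by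
    induction n with
    | zero => simp
    | succ n ih =>
      have hstep := hiso.dist_zpow_smul ξ O n (n + 1)
      rw [add_sub_cancel_left, zpow_one] at hstep
      push_cast
      linarith [dist_triangle O ((ξ ^ (n : ℤ)) • O) ((ξ ^ ((n : ℤ) + 1)) • O)]
  rcases Int.natAbs_eq k with h | h
  · rw [h]; exact hnat _
  · have := hiso.dist_zpow_smul ξ O k.natAbs 0
    rw [zpow_zero, one_smul, zero_sub, ← h, dist_comm] at this
    rw [← this]; exact hnat _

lemma isStraightChain_zpow_smul (hiso : IsomAction G X) {δ ε L : ℝ} (hyp : FourPointHyp X δ)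
    (hgeo : IsGeodesicSpace X) {ξ : G} (hdisp : ∀ x : X, L ≤ dist x (ξ • x)) {O : X}
    (hO : dist O (ξ • O) ≤ L + ε) (hL : 4 * δ + ε < L) :
    IsStraightChain (fun a : ℤ => (ξ ^ a) • O) (dist O (ξ • O)) (2 * δ + ε / 2) where
  le_dist_succ k := by
    rw [hiso.dist_zpow_smul, add_sub_cancel_left, zpow_one]
  gromovProduct_le k := by
    have h := hyp.gromovProduct_le_of_forall_le_dist hgeo (hiso.isometry_smul ξ) hdisp hO hL
    rw [← (hiso.isometry_smul (ξ ^ (k - 1))).gromovProduct_eq] at h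
    have e (n : ℤ) (x : X) : ξ ^ n • ξ • x = ξ ^ (n + 1) • x := by rw [smul_smul, zpow_add_one]
    simp only [e, sub_add_cancel] at h
    exact h

lemma isNearestIndex_zpow_smul (hiso : IsomAction G X) {ξ : G} {O y : X} {b : ℤ}
    (hy : IsNearestIndex (fun a : ℤ => (ξ ^ a) • O) y b) (t : ℤ) :
    IsNearestIndex (fun a : ℤ => (ξ ^ a) • O) ((ξ ^ t) • y) (b + t) := by
  have e (c : ℤ) : dist ((ξ ^ t) • y) ((ξ ^ (c + t)) • O) = dist y ((ξ ^ c) • O) := by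
    rw [← hiso (ξ ^ t) y, smul_smul, ← zpow_add, add_comm t c]
  intro a
  have ha := e (a - t)
  rw [sub_add_cancel] at ha
  show dist _ ((ξ ^ (b + t)) • O) ≤ dist _ ((ξ ^ a) • O)
  rw [e, ha]
  exact hy (a - t)

lemma abs_dist_zpow_smul_sub_le (hiso : IsomAction G X) {δ ρ : ℝ} (hyp : FourPointHyp X δ)
    {ξ : G} {O : X} (hu : IsStraightChain (fun a : ℤ => (ξ ^ a) • O) (dist O (ξ • O)) ρ)
    (hD : 2 * ρ + 4 * δ < dist O (ξ • O)) {z : X} {b : ℤ}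
    (hz : IsNearestIndex (fun a : ℤ => (ξ ^ a) • O) z b) (t : ℤ) :
    |dist O ((ξ ^ t) • z) - dist O z| ≤ ((t + 2 * b).natAbs + 1) * dist O (ξ • O) + 2 * δ := by
  have hstep (k : ℤ) : dist ((ξ ^ k) • O) ((ξ ^ (k + 1)) • O) ≤ dist O (ξ • O) := by
    rw [hiso.dist_zpow_smul, add_sub_cancel_left, zpow_one]
  have h := hu.abs_dist_sub_dist_le_of_isNearestIndex hyp hD hstep hz (-t) 0
  have hzt : dist z ((ξ ^ (-t)) • O) = dist O ((ξ ^ t) • z) := by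
    rw [← hiso (ξ ^ t) z, smul_smul, ← zpow_add, add_neg_cancel, zpow_zero, one_smul, dist_comm]
  simp only [zpow_zero, one_smul, hzt, dist_comm z O] at h
  have eA := hiso.dist_zpow_smul ξ O b (-t)
  have eC := hiso.dist_zpow_smul ξ O (-t - b) b
  rw [show b - (-t - b) = t + 2 * b by ring] at eC
  have hsym : |dist ((ξ ^ b) • O) ((ξ ^ (-t)) • O) - dist ((ξ ^ b) • O) O| ≤
      dist O ((ξ ^ (t + 2 * b)) • O) := by
    rw [abs_sub_le_iff, eA]
    constructor <;> linarith [dist_triangle O ((ξ ^ (-t - b)) • O) ((ξ ^ b) • O),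
      dist_triangle O ((ξ ^ b) • O) ((ξ ^ (-t - b)) • O), dist_comm O ((ξ ^ b) • O),
      dist_comm ((ξ ^ (-t - b)) • O) ((ξ ^ b) • O)]
  have := hiso.dist_zpow_smul_le ξ O (t + 2 * b)
  linarith

lemma abs_dist_sub_le_of_separated (hiso : IsomAction G X) {δ ρ : ℝ} (hyp : FourPointHyp X δ)
    {ξ : G} {O : X} (hu : IsStraightChain (fun a : ℤ => (ξ ^ a) • O) (dist O (ξ • O)) ρ)
    (hD : 4 * ρ + 10 * δ < dist O (ξ • O)) {v z : X} {p q s : ℤ}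
    (hv : IsNearestIndex (fun a : ℤ => (ξ ^ a) • O) v p)
    (hz : IsNearestIndex (fun a : ℤ => (ξ ^ a) • O) z q) (hs : s.natAbs ≤ 2)
    (hpq : min p q < s ∧ s < max p q) :
    |dist v z - (dist O v + dist O z)| ≤ 4 * dist O (ξ • O) + 2 * (ρ + 4 * δ) := by
  have h := hu.abs_dist_sub_le_of_separated hyp hD hv hz hpq O
  have hOs : dist O ((ξ ^ s) • O) ≤ 2 * dist O (ξ • O) :=
    (hiso.dist_zpow_smul_le ξ O s).trans
      (mul_le_mul_of_nonneg_right (by exact_mod_cast hs) dist_nonneg)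
  beta_reduce at h
  linarith

lemma abs_dist_zpow_smul_sub_le_of_separated (hiso : IsomAction G X) {δ ρ : ℝ}
    (hyp : FourPointHyp X δ) {ξ : G} {O : X}
    (hu : IsStraightChain (fun a : ℤ => (ξ ^ a) • O) (dist O (ξ • O)) ρ)
    (hD : 4 * ρ + 10 * δ < dist O (ξ • O)) {v z : X} {p q s t : ℤ}
    (hv : IsNearestIndex (fun a : ℤ => (ξ ^ a) • O) v p)
    (hz : IsNearestIndex (fun a : ℤ => (ξ ^ a) • O) z q) (ht : (t + 2 * q).natAbs ≤ 3)
    (hs : s.natAbs ≤ 2) (hpq : min p (q + t) < s ∧ s < max p (q + t)) :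
    |dist v ((ξ ^ t) • z) - (dist O v + dist O z)| ≤
      8 * dist O (ξ • O) + 2 * (ρ + 4 * δ) + 2 * δ := by
  have hδ := hyp.nonneg O
  have hρ := hu.rho_nonneg
  have h1 := hiso.abs_dist_sub_le_of_separated hyp hu hD hv
    (hiso.isNearestIndex_zpow_smul hz t) hs hpq
  have h2 := hiso.abs_dist_zpow_smul_sub_le hyp hu (by linarith) hz t
  have h3 : ((t + 2 * q).natAbs + 1 : ℝ) * dist O (ξ • O) ≤ 4 * dist O (ξ • O) :=
    mul_le_mul_of_nonneg_right (by exact_mod_cast Nat.add_le_add_right ht 1) dist_nonneg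
  rw [abs_le] at h1 h2 ⊢
  constructor <;> linarith

end IsomAction

def indexExp (i : ℤ) : ℤ := if 0 < i then i - 1 else i

lemma exists_ne_zero_indexExp_eq (a : ℤ) : ∃ i ≠ 0, indexExp i = a := by
  rcases le_or_gt 0 a with h | h
  · exact ⟨a + 1, by omega, by unfold indexExp; split_ifs <;> omega⟩
  · exact ⟨a, h.ne, by unfold indexExp; split_ifs <;> omega⟩

def symmExp (j : ℤ) : ℤ := if 0 < j then -2 * j - 1 else -2 * j + 1

lemma natAbs_symmExp_add_le (j : ℤ) : (symmExp j + 2 * indexExp j).natAbs ≤ 3 := by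
  unfold symmExp indexExp; split_ifs <;> omega

lemma exists_separating_of_sep1 {i j : ℤ} (hi : i ≠ 0) (hj : j ≠ 0) (h : Sep1 i j) :
    ∃ s : ℤ, s.natAbs ≤ 2 ∧
      min (indexExp i) (indexExp j) < s ∧ s < max (indexExp i) (indexExp j) := by
  by_contra! hne
  have := hne 0 (by norm_num)
  have := hne (-1) (by norm_num)
  unfold Sep1 indexExp at *
  split_ifs at * <;> omega

/-- Passing from `β` to `β₋` moves the nearest orbit index `q` of `β(O)` to `-q - 3` or `-q + 1`,
to the other side of `O`. -/
lemma exists_separating_of_not_sep1 {i j : ℤ} (hj : j ≠ 0) (h : ¬Sep1 i j) :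
    ∃ s : ℤ, s.natAbs ≤ 2 ∧ min (indexExp i) (indexExp j + symmExp j) < s ∧
      s < max (indexExp i) (indexExp j + symmExp j) := by
  by_contra! hne
  have := hne (-2) (by norm_num)
  have := hne (-1) (by norm_num)
  have := hne 0 (by norm_num)
  have := hne 1 (by norm_num)
  unfold Sep1 indexExp symmExp at *
  split_ifs at * <;> omega

section IndexFun

variable {G X : Type*} [Group G] [MetricSpace X] [MulAction G X]

lemma orbitPt_eq_zpow_indexExp (ξ : G) (O : X) (i : ℤ) :
    orbitPt ξ O i = (ξ ^ indexExp i) • O := by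
  unfold orbitPt indexExp; split_ifs <;> rfl

lemma IsIndexFun.isNearestIndex {ξ : G} {O : X} {jx : X → ℤ} (hjx : IsIndexFun ξ O jx)
    (y : X) :
    IsNearestIndex (fun a : ℤ => (ξ ^ a) • O) y (indexExp (jx y)) := by
  intro a
  obtain ⟨i, hi, rfl⟩ := exists_ne_zero_indexExp_eq a
  simpa only [orbitPt_eq_zpow_indexExp] using (hjx y).2.1 i hi

lemma symmElem_eq (ξ : G) (O : X) (jx : X → ℤ) (β : G) :
    symmElem ξ O jx β = ξ ^ symmExp (jx (β • O)) * β := by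
  unfold symmElem symmExp; split_ifs <;> rfl

end IndexFun

theorem stmt16_general {G X : Type*} [Group G] [MetricSpace X] [MulAction G X]
    (δ ε L : ℝ)
    (hεδ : ε < δ)
    (hyp : FourPointHyp X δ) (hgeo : IsGeodesicSpace X)
    (hiso : IsomAction G X)
    (ξ : G)
    (hL : L = ⨅ x : X, dist x (ξ • x)) (hL300 : 300 * δ ≤ L)
    (O : X) (hO : dist O (ξ • O) ≤ L + ε)
    (jx : X → ℤ) (hjx : IsIndexFun ξ O jx) :
    ∀ α β : G,
      |dist O (twProd ξ O jx α β • O) - (dist O (α • O) + dist O (β • O))| ≤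
        12 * L + 758 * δ + 12 * ε := by
  intro α β
  have hdisp (x : X) : L ≤ dist x (ξ • x) := by
    rw [hL]; exact ciInf_le ⟨0, by rintro _ ⟨y, rfl⟩; exact dist_nonneg⟩ x
  have hδ := hyp.nonneg O
  have hε : 0 ≤ ε := by linarith [hdisp O]
  have hu := hiso.isStraightChain_zpow_smul hyp hgeo hdisp hO (by linarith)
  have hD : 4 * (2 * δ + ε / 2) + 10 * δ < dist O (ξ • O) := by linarith [hdisp O]
  have hv := hjx.isNearestIndex (α⁻¹ • O)
  have hz := hjx.isNearestIndex (β • O)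
  have hα : dist O (α • O) = dist O (α⁻¹ • O) := by
    simpa [dist_comm] using hiso.dist_mul_smul α 1 O
  rw [twProd, hα]
  split_ifs with hsep
  · obtain ⟨s, hs, hpq⟩ := exists_separating_of_sep1 (hjx _).1 (hjx _).1 hsep
    rw [hiso.dist_mul_smul]
    linarith [hiso.abs_dist_sub_le_of_separated hyp hu hD hv hz hs hpq]
  · obtain ⟨s, hs, hpq⟩ := exists_separating_of_not_sep1 (hjx _).1 hsep
    rw [symmElem_eq, hiso.dist_mul_smul, mul_smul]
    linarith [hiso.abs_dist_zpow_smul_sub_le_of_separated hyp hu hD hv hz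
      (natAbs_symmExp_add_le _) hs hpq]

/-- The norm is almost multiplicative for the twisted product:
`|‖α⋆β‖ − (‖α‖ + ‖β‖)| ≤ Δ⋆ = 12L + 758δ + 12ε`. -/
theorem stmt16 {G X : Type*} [Group G] [MetricSpace X] [MulAction G X]
    [ProperSpace X] (δ ε L : ℝ)
    (hδ : 0 < δ) (hε : 0 < ε) (hεδ : ε < δ)
    (hyp : FourPointHyp X δ) (hgeo : IsGeodesicSpace X)
    (hiso : IsomAction G X)
    (ξ : G) (hhyp : IsHypElem X ξ) (τ : ℝ → X) (hax : IsAxisAct ξ τ)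
    (hL : L = ⨅ x : X, dist x (ξ • x)) (hL300 : 300 * δ ≤ L)
    (O : X) (hO : dist O (ξ • O) ≤ L + ε)
    (jx : X → ℤ) (hjx : IsIndexFun ξ O jx) :
    ∀ α β : G,
      |dist O (twProd ξ O jx α β • O) - (dist O (α • O) + dist O (β • O))| ≤
        12 * L + 758 * δ + 12 * ε :=
  stmt16_general δ ε L hεδ hyp hgeo hiso ξ hL hL300 O hO jx hjx
end

section
/- For β ∈ G and integer κ ≥ 4: (ξ^κ ⋆ β)₊ equals ξ^κβ₊ if β is positive and ξ^κβ₋ if β is negative, and it is always positive; (ξ^κ ⋆ β)₋ equals ξ^{−κ}β₋ if β is positive and ξ^{−κ−4}β₊ if β is negative, and it is always negative. Consequently α⋆(ξ^κ⋆β) = α ξ^{κ*} β_ε with κ* ∈ {κ, −κ, −κ−4} and ε ∈ {+,−}. -/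
open Metric Set
open scoped Classical

/-- Auxiliary: exponent of `ξ` at the orbit point of index `i`. -/
def eIdx18 (i : ℤ) : ℤ := if 0 < i then i - 1 else i

/-- Auxiliary: index shift induced by multiplication by `ξ^k`. -/
def sIdx18 (k i : ℤ) : ℤ :=
  if 0 ≤ eIdx18 i + k then eIdx18 i + k + 1 else eIdx18 i + k

lemma orbitPt_eq18 {G X : Type*} [Group G] [MetricSpace X] [MulAction G X]
    (ξ : G) (O : X) (i : ℤ) : orbitPt ξ O i = (ξ ^ eIdx18 i) • O := by
  unfold orbitPt eIdx18; split <;> rfl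

lemma sIdx18_ne_zero (k i : ℤ) : sIdx18 k i ≠ 0 := by
  unfold sIdx18; split <;> omega

lemma eIdx18_sIdx18 (k i : ℤ) : eIdx18 (sIdx18 k i) = eIdx18 i + k := by
  simp only [eIdx18, sIdx18]; split_ifs <;> omega

lemma sIdx18_sIdx18 (k i : ℤ) (hi : i ≠ 0) : sIdx18 k (sIdx18 (-k) i) = i := by
  unfold sIdx18 eIdx18; split_ifs <;> omega

lemma sIdx18_mono (k : ℤ) {i i' : ℤ} (_hi : i ≠ 0) (_hi' : i' ≠ 0) (h : i ≤ i') :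
    sIdx18 k i ≤ sIdx18 k i' := by
  unfold sIdx18 eIdx18; split_ifs <;> omega

lemma smul_orbitPt18 {G X : Type*} [Group G] [MetricSpace X] [MulAction G X]
    (ξ : G) (O : X) (k i : ℤ) :
    ξ ^ k • orbitPt ξ O i = orbitPt ξ O (sIdx18 k i) := by
  rw [orbitPt_eq18, orbitPt_eq18, eIdx18_sIdx18, smul_smul, ← zpow_add, add_comm]

lemma vorCell_smul18 {G X : Type*} [Group G] [MetricSpace X] [MulAction G X]
    (hiso : IsomAction G X) (ξ : G) (O : X) (k i : ℤ) (y : X)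
    (hy : y ∈ vorCell ξ O i) : ξ ^ k • y ∈ vorCell ξ O (sIdx18 k i) := by
  intro m hm
  have h1 : orbitPt ξ O (sIdx18 k i) = ξ ^ k • orbitPt ξ O i :=
    (smul_orbitPt18 ξ O k i).symm
  have h2 : orbitPt ξ O m = ξ ^ k • orbitPt ξ O (sIdx18 (-k) m) := by
    rw [smul_orbitPt18, sIdx18_sIdx18 k m hm]
  rw [h1, h2, hiso, hiso]
  exact hy _ (sIdx18_ne_zero _ _)

lemma jx_smul18 {G X : Type*} [Group G] [MetricSpace X] [MulAction G X]
    (hiso : IsomAction G X) (ξ : G) (O : X) (jx : X → ℤ)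
    (hjx : IsIndexFun ξ O jx) (k : ℤ) (y : X) :
    jx (ξ ^ k • y) = sIdx18 k (jx y) := by
  obtain ⟨hne, hmem, hmin⟩ := hjx y
  obtain ⟨hne', hmem', hmin'⟩ := hjx (ξ ^ k • y)
  have h1 : jx (ξ ^ k • y) ≤ sIdx18 k (jx y) :=
    hmin' _ (sIdx18_ne_zero _ _) (vorCell_smul18 hiso ξ O k _ y hmem)
  have hback : ξ ^ (-k) • (ξ ^ k • y) = y := by
    rw [zpow_neg]; exact inv_smul_smul _ _
  have h2mem := vorCell_smul18 hiso ξ O (-k) _ _ hmem'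
  rw [hback] at h2mem
  have h2 : jx y ≤ sIdx18 (-k) (jx (ξ ^ k • y)) :=
    hmin _ (sIdx18_ne_zero _ _) h2mem
  have h3 := sIdx18_mono k hne (sIdx18_ne_zero _ _) h2
  rw [sIdx18_sIdx18 k _ hne'] at h3
  omega

lemma orbit_inj18 {G X : Type*} [Group G] [MetricSpace X] [MulAction G X]
    (hiso : IsomAction G X) (ξ : G) (hhyp : IsHypElem X ξ) (O : X)
    (d : ℤ) (hd : d ≠ 0) : ξ ^ d • O ≠ O := by
  intro h
  obtain ⟨x, A, hA, B, hAB⟩ := hhyp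
  have hstab : ∀ n : ℤ, ξ ^ (d * n) • O = O := by
    intro n
    have h1 : ξ ^ d ∈ MulAction.stabilizer G O := h
    have h2 := Subgroup.zpow_mem _ h1 n
    rw [← zpow_mul] at h2
    exact h2
  obtain ⟨n, hn⟩ := exists_nat_gt ((B + 2 * dist x O) / A)
  have hd1 : (1:ℤ) ≤ |d| := by rcases abs_cases d with ⟨h1, h2⟩ | ⟨h1, h2⟩ <;> omega
  have habs : (n : ℤ) ≤ |d * (n : ℤ)| := by
    rw [abs_mul, abs_of_nonneg (Int.natCast_nonneg n)]
    exact le_mul_of_one_le_left (Int.natCast_nonneg n) hd1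
  have key := hAB (d * n) 0
  rw [Int.cast_zero, sub_zero] at key
  have hdist : dist (ξ ^ (d * (n : ℤ)) • x) (ξ ^ (0 : ℤ) • x) ≤ 2 * dist x O := by
    rw [zpow_zero, one_smul]
    calc dist (ξ ^ (d * (n : ℤ)) • x) x
        ≤ dist (ξ ^ (d * (n : ℤ)) • x) (ξ ^ (d * (n : ℤ)) • O)
          + dist (ξ ^ (d * (n : ℤ)) • O) x := dist_triangle _ _ _
      _ = dist x O + dist O x := by rw [hiso, hstab]
      _ = 2 * dist x O := by rw [dist_comm O x]; ring
  have hcast : ((n : ℕ) : ℝ) ≤ |((d * (n : ℕ) : ℤ) : ℝ)| := by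
    rw [← Int.cast_abs]; exact_mod_cast habs
  have hAn : B + 2 * dist x O < A * n := by
    rw [div_lt_iff₀ hA] at hn; linarith
  have := mul_le_mul_of_nonneg_left hcast hA.le
  linarith

lemma jx_O18 {G X : Type*} [Group G] [MetricSpace X] [MulAction G X]
    (hiso : IsomAction G X) (ξ : G) (hhyp : IsHypElem X ξ) (O : X)
    (jx : X → ℤ) (hjx : IsIndexFun ξ O jx) : jx O = 1 := by
  obtain ⟨hne, hmem, hmin⟩ := hjx O
  have h1 : O ∈ vorCell ξ O 1 := by
    intro m hm
    rw [orbitPt_eq18]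
    have he1 : eIdx18 1 = 0 := rfl
    rw [he1, zpow_zero, one_smul, dist_self]
    exact dist_nonneg
  have hle : jx O ≤ 1 := hmin 1 one_ne_zero h1
  by_contra hne1
  have hlt : jx O < 0 := by omega
  have h2 := hmem 1 one_ne_zero
  rw [orbitPt_eq18, orbitPt_eq18] at h2
  have he : eIdx18 (jx O) = jx O := by unfold eIdx18; split <;> omega
  have he1 : eIdx18 1 = 0 := rfl
  rw [he, he1, zpow_zero, one_smul, dist_self] at h2
  have heq : ξ ^ jx O • O = O :=
    (dist_eq_zero.mp (le_antisymm h2 dist_nonneg)).symm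
  exact orbit_inj18 hiso ξ hhyp O (jx O) (by omega) heq

/-- Inserting hyperbolic elements: for `κ ≥ 4`, `(ξ^κ ⋆ β)₊ = ξ^κβ₊` (resp.
`ξ^κβ₋`) if `β` is positive (resp. negative), and it is positive;
`(ξ^κ ⋆ β)₋ = ξ^{−κ}β₋` (resp. `ξ^{−κ−4}β₊`) if `β` is positive (resp. negative),
and it is negative. Consequently `α⋆(ξ^κ⋆β) = α ξ^{κ*} β_ε` with
`κ* ∈ {κ, −κ, −κ−4}` and `ε ∈ {+,−}`. -/
theorem stmt18 {G X : Type*} [Group G] [MetricSpace X] [MulAction G X]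
    [ProperSpace X] (δ ε L : ℝ)
    (hδ : 0 < δ) (hε : 0 < ε) (hεδ : ε < δ)
    (hyp : FourPointHyp X δ) (hgeo : IsGeodesicSpace X)
    (hiso : IsomAction G X)
    (ξ : G) (hhyp : IsHypElem X ξ) (τ : ℝ → X) (hax : IsAxisAct ξ τ)
    (hL : L = ⨅ x : X, dist x (ξ • x)) (hL300 : 300 * δ ≤ L)
    (O : X) (hO : dist O (ξ • O) ≤ L + ε)
    (jx : X → ℤ) (hjx : IsIndexFun ξ O jx)
    (κ : ℤ) (hκ : 4 ≤ κ) :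
    ∀ β : G,
      (0 < jx (β • O) → twProd ξ O jx (ξ ^ κ) β = ξ ^ κ * β) ∧
      (jx (β • O) < 0 → twProd ξ O jx (ξ ^ κ) β = ξ ^ κ * symmElem ξ O jx β) ∧
      0 < jx (twProd ξ O jx (ξ ^ κ) β • O) ∧
      (0 < jx (β • O) →
        symmElem ξ O jx (twProd ξ O jx (ξ ^ κ) β) = ξ ^ (-κ) * symmElem ξ O jx β) ∧
      (jx (β • O) < 0 →
        symmElem ξ O jx (twProd ξ O jx (ξ ^ κ) β) = ξ ^ (-κ - 4) * β) ∧
      jx (symmElem ξ O jx (twProd ξ O jx (ξ ^ κ) β) • O) < 0 ∧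
      (∀ α : G, ∃ κs ∈ ({κ, -κ, -κ - 4} : Set ℤ),
        twProd ξ O jx α (twProd ξ O jx (ξ ^ κ) β) = α * ξ ^ κs * β ∨
        twProd ξ O jx α (twProd ξ O jx (ξ ^ κ) β) =
          α * ξ ^ κs * symmElem ξ O jx β) := by
  have tw_def : ∀ α' β' : G, twProd ξ O jx α' β' =
      if Sep1 (jx (α'⁻¹ • O)) (jx (β' • O)) then α' * β'
      else α' * symmElem ξ O jx β' := fun _ _ => rfl
  have keyJ : ∀ (k : ℤ) (γ : G), jx ((ξ ^ k * γ) • O) = sIdx18 k (jx (γ • O)) := by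
    intro k γ; rw [mul_smul]; exact jx_smul18 hiso ξ O jx hjx k _
  have hjO : jx O = 1 := jx_O18 hiso ξ hhyp O jx hjx
  have hinvO : jx ((ξ ^ κ)⁻¹ • O) = -κ := by
    have h1 : (ξ ^ κ)⁻¹ • O = ξ ^ (-κ) • O := by rw [zpow_neg]
    rw [h1, jx_smul18 hiso ξ O jx hjx, hjO]
    unfold sIdx18 eIdx18; split_ifs <;> omega
  intro β
  have hj0 : jx (β • O) ≠ 0 := (hjx (β • O)).1
  rcases hj0.lt_or_gt with hjneg | hjpos
  · -- β negative
    have hsep : ¬ Sep1 (jx ((ξ ^ κ)⁻¹ • O)) (jx (β • O)) := by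
      rw [hinvO]; unfold Sep1; omega
    have hT : twProd ξ O jx (ξ ^ κ) β = ξ ^ κ * symmElem ξ O jx β := by
      rw [tw_def, if_neg hsep]
    have hsymβ : symmElem ξ O jx β = ξ ^ (-2 * jx (β • O) + 1) * β := by
      unfold symmElem; rw [if_neg (by omega : ¬ 0 < jx (β • O))]
    have hTc : twProd ξ O jx (ξ ^ κ) β = ξ ^ (κ + (-2 * jx (β • O) + 1)) * β := by
      rw [hT, hsymβ, ← mul_assoc, ← zpow_add]
    have hjT : jx (twProd ξ O jx (ξ ^ κ) β • O) = κ - jx (β • O) + 2 := by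
      rw [hTc, keyJ]; unfold sIdx18 eIdx18; split_ifs <;> omega
    have hsymT : symmElem ξ O jx (twProd ξ O jx (ξ ^ κ) β) = ξ ^ (-κ - 4) * β := by
      unfold symmElem
      rw [hjT, if_pos (by omega : (0:ℤ) < κ - jx (β • O) + 2), hTc,
        ← mul_assoc, ← zpow_add]
      congr 2
      ring
    have hjsymT : jx (symmElem ξ O jx (twProd ξ O jx (ξ ^ κ) β) • O) < 0 := by
      rw [hsymT, keyJ]; unfold sIdx18 eIdx18; split_ifs <;> omega
    refine ⟨fun h => absurd h (by omega), fun _ => hT, by omega, 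
      fun h => absurd h (by omega), fun _ => hsymT, hjsymT, ?_⟩
    intro α
    by_cases hs : Sep1 (jx (α⁻¹ • O)) (jx (twProd ξ O jx (ξ ^ κ) β • O))
    · refine ⟨κ, by simp, Or.inr ?_⟩
      rw [tw_def, if_pos hs, hT]
      exact (mul_assoc α (ξ ^ κ) _).symm
    · refine ⟨-κ - 4, by simp, Or.inl ?_⟩
      rw [tw_def, if_neg hs, hsymT]
      exact (mul_assoc α (ξ ^ (-κ - 4)) β).symm
  · -- β positive
    have hsep : Sep1 (jx ((ξ ^ κ)⁻¹ • O)) (jx (β • O)) := by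
      rw [hinvO]; unfold Sep1; omega
    have hT : twProd ξ O jx (ξ ^ κ) β = ξ ^ κ * β := by
      rw [tw_def, if_pos hsep]
    have hsymβ : symmElem ξ O jx β = ξ ^ (-2 * jx (β • O) - 1) * β := by
      unfold symmElem; rw [if_pos hjpos]
    have hjT : jx (twProd ξ O jx (ξ ^ κ) β • O) = jx (β • O) + κ := by
      rw [hT, keyJ]; unfold sIdx18 eIdx18; split_ifs <;> omega
    have hsymT : symmElem ξ O jx (twProd ξ O jx (ξ ^ κ) β) =
        ξ ^ (-κ) * symmElem ξ O jx β := by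
      unfold symmElem
      rw [hjT, if_pos (by omega : (0:ℤ) < jx (β • O) + κ), hT, if_pos hjpos,
        ← mul_assoc, ← zpow_add, ← mul_assoc, ← zpow_add]
      congr 2
      ring
    have hsymTc : symmElem ξ O jx (twProd ξ O jx (ξ ^ κ) β) =
        ξ ^ (-κ + (-2 * jx (β • O) - 1)) * β := by
      rw [hsymT, hsymβ, ← mul_assoc, ← zpow_add]
    have hjsymT : jx (symmElem ξ O jx (twProd ξ O jx (ξ ^ κ) β) • O) < 0 := by
      rw [hsymTc, keyJ]; unfold sIdx18 eIdx18; split_ifs <;> omega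
    refine ⟨fun _ => hT, fun h => absurd h (by omega), by omega,
      fun _ => hsymT, fun h => absurd h (by omega), hjsymT, ?_⟩
    intro α
    by_cases hs : Sep1 (jx (α⁻¹ • O)) (jx (twProd ξ O jx (ξ ^ κ) β • O))
    · refine ⟨κ, by simp, Or.inl ?_⟩
      rw [tw_def, if_pos hs, hT]
      exact (mul_assoc α (ξ ^ κ) β).symm
    · refine ⟨-κ, by simp, Or.inr ?_⟩
      rw [tw_def, if_neg hs, hsymT]
      exact (mul_assoc α (ξ ^ (-κ)) _).symm
end
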